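/- Let (M,g) be a lightlike hypersurface, tangent to the structure vector field ζ, of an indefinite Sasakian manifold (M̄, φ̄, ζ, η, ḡ), whose second fundamental form h is parallel. Then for all X, Y tangent to M: (i) B(X, φY) + B(Y, φX) = 0; (ii) A*_ξ V = 0; (iii) A*_ξ(φ(A*_ξ X)) = 0. -/

import Mathlib

/-- An algebraic model, at the level of (local) smooth functions and vector fields, of a
lightlike hypersurface `(M,g)`, tangent to the structure vector field `ζ`, of an
indefinite Sasakian manifold `(M̄, φ̄, ζ, η, ḡ)`, together with a chosen screen
distribution `S(TM)` (containing `ζ`, `φ̄ ξ` and `φ̄ N`), a (local) section `ξ` of the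
rank-one normal bundle `TM⊥ ⊆ TM`, the associated null transversal section `N`, and all
the induced objects of the Gauss–Weingarten equations.

* `F` models the commutative `ℝ`-algebra of smooth functions on (an open subset of) `M`;
* `E` models the `F`-module of sections of the ambient tangent bundle `TM̄` restricted to `M`;
* `η(X)` is encoded throughout as `ḡ(X,ζ)`, `u(X)` as `g(X,V)`, `v(X)` as `g(X,U)` and
  `θ(X)` as `ḡ(X,N)`. -/
structure SasakiLightlikeHypersurface (F : Type) [CommRing F] [Algebra ℝ F]
    (E : Type) [AddCommGroup E] [Module F E] where
  /-- the submodule of vector fields tangent to the hypersurface `M` -/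
  TM : Submodule F E
  /-- the ambient metric `ḡ` (whose restriction to `TM` is the degenerate induced metric `g`) -/
  gbar : E →ₗ[F] E →ₗ[F] F
  gbar_symm : ∀ X Y : E, gbar X Y = gbar Y X
  /-- the directional derivative `X ⬝ f` of functions along tangent vector fields -/
  D : TM → Derivation ℝ F F
  D_add : ∀ X Y : TM, D (X + Y) = D X + D Y
  D_smul : ∀ (f : F) (X : TM) (k : F), D (f • X) k = f * D X k
  /-- the Lie bracket of vector fields tangent to `M` -/
  bracket : TM → TM → TM
  D_bracket : ∀ (X Y : TM) (f : F), D (bracket X Y) f = D X (D Y f) - D Y (D X f)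
  /-- the ambient Levi-Civita connection `∇̄`, in directions tangent to `M` -/
  nablaBar : TM → E → E
  nablaBar_add : ∀ (X Y : TM) (Z : E), nablaBar (X + Y) Z = nablaBar X Z + nablaBar Y Z
  nablaBar_smul : ∀ (f : F) (X : TM) (Z : E), nablaBar (f • X) Z = f • nablaBar X Z
  nablaBar_add' : ∀ (X : TM) (Y Z : E), nablaBar X (Y + Z) = nablaBar X Y + nablaBar X Z
  nablaBar_leibniz : ∀ (X : TM) (f : F) (Y : E),
    nablaBar X (f • Y) = D X f • Y + f • nablaBar X Y
  nablaBar_metric : ∀ (X : TM) (Y Z : E),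
    D X (gbar Y Z) = gbar (nablaBar X Y) Z + gbar Y (nablaBar X Z)
  nablaBar_torsion_free : ∀ X Y : TM,
    nablaBar X (Y : E) - nablaBar Y (X : E) = (bracket X Y : E)
  /-- a (local) section `ξ` of the rank-one lightlike normal bundle `TM⊥ ⊆ TM` -/
  xi : TM
  xi_normal : ∀ Y : TM, gbar (xi : E) (Y : E) = 0
  xi_spans : ∀ X : TM, (∀ Y : TM, gbar (X : E) (Y : E) = 0) →
    ∃ f : F, (X : E) = f • (xi : E)
  /-- the screen distribution `S(TM)`, a nondegenerate complement of `TM⊥` in `TM` -/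
  S : Submodule F E
  S_le : S ≤ TM
  S_compl : ∀ X : TM, ∃ W ∈ S, ∃ f : F, (X : E) = W + f • (xi : E)
  S_nondeg : ∀ W ∈ S, (∀ Z ∈ S, gbar W Z = 0) → W = 0
  /-- the null transversal section `N`, with `ḡ(ξ,N) = 1`, `ḡ(N,N) = 0`, `ḡ(N, S(TM)) = 0` -/
  Nt : E
  gbar_xi_Nt : gbar (xi : E) Nt = 1
  gbar_Nt_Nt : gbar Nt Nt = 0
  gbar_Nt_S : ∀ Z ∈ S, gbar Nt Z = 0
  /-- the induced connection `∇` on `M` -/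
  nabla : TM → TM → TM
  /-- the local second fundamental form `B` of `M` (the second fundamental form being
  `h(X,Y) = B(X,Y) N`) -/
  B : TM → TM → F
  /-- Gauss equation: `∇̄_X Y = ∇_X Y + B(X,Y) N` -/
  gauss : ∀ X Y : TM, nablaBar X (Y : E) = (nabla X Y : E) + B X Y • Nt
  /-- the shape operator `A_N` of `M` -/
  AN : TM → TM
  /-- the transversal `1`-form `τ`, so that the transversal connection is `∇ᵗ_X N = τ(X) N` -/
  tau : TM → F
  /-- Weingarten equation: `∇̄_X N = −A_N X + τ(X) N` -/
  weingarten : ∀ X : TM, nablaBar X Nt = -(AN X : E) + tau X • Nt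
  /-- the screen shape operator `A*_ξ` -/
  Astar : TM → TM
  /-- `∇_X ξ = −A*_ξ X − τ(X) ξ` -/
  weingarten_screen : ∀ X : TM, nablaBar X (xi : E) = -(Astar X : E) - tau X • (xi : E)
  /-- the projection `P` of `TM` onto `S(TM)`: `X = PX + θ(X) ξ`, `θ(X) = ḡ(X,N)` -/
  P : TM → TM
  P_mem : ∀ X : TM, (P X : E) ∈ S
  P_spec : ∀ X : TM, (X : E) = (P X : E) + gbar (X : E) Nt • (xi : E)
  /-- the induced connection `∇*` on the screen distribution -/
  nablaStar : TM → TM → TM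
  /-- the local second fundamental form `C` of the screen distribution -/
  C : TM → TM → F
  nablaStar_mem : ∀ (X Y : TM), (Y : E) ∈ S → (nablaStar X Y : E) ∈ S
  /-- screen Gauss equation: `∇_X PY = ∇*_X PY + C(X,PY) ξ` -/
  screen_gauss : ∀ (X Y : TM), (Y : E) ∈ S → nabla X Y = nablaStar X Y + C X Y • xi
  /-- the ambient almost contact structure tensor `φ̄` -/
  phibar : E →ₗ[F] E
  /-- the structure vector field `ζ`, tangent to `M` and lying in the screen distribution -/
  zeta : TM
  zeta_mem : (zeta : E) ∈ S
  gbar_zeta_zeta : gbar (zeta : E) (zeta : E) = 1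
  /-- `φ̄² X = −X + η(X) ζ`, where `η(X) = ḡ(X,ζ)` -/
  phibar_sq : ∀ X : E, phibar (phibar X) = -X + gbar X (zeta : E) • (zeta : E)
  /-- `ḡ(φ̄X, φ̄Y) = ḡ(X,Y) − η(X) η(Y)` -/
  phibar_metric : ∀ X Y : E,
    gbar (phibar X) (phibar Y) = gbar X Y - gbar X (zeta : E) * gbar Y (zeta : E)
  /-- Sasakian condition: `(∇̄_X φ̄) Y = ḡ(X,Y) ζ − η(Y) X` -/
  sasaki : ∀ (X : TM) (Y : E), nablaBar X (phibar Y) - phibar (nablaBar X Y)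
    = gbar (X : E) Y • (zeta : E) - gbar Y (zeta : E) • (X : E)
  /-- `∇̄_X ζ = −φ̄ X` -/
  sasaki_zeta : ∀ X : TM, nablaBar X (zeta : E) = -(phibar (X : E))
  /-- `U = −φ̄ N`, tangent to `M` and lying in the screen distribution -/
  U : TM
  U_mem : (U : E) ∈ S
  U_spec : (U : E) = -(phibar Nt)
  /-- `V = −φ̄ ξ`, tangent to `M` and lying in the screen distribution -/
  V : TM
  V_mem : (V : E) ∈ S
  V_spec : (V : E) = -(phibar (xi : E))
  /-- the induced structure tensor `φ` on `M` -/
  phi : TM → TM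
  /-- `φ̄ X = φ X + u(X) N`, where `u(X) = g(X,V)` -/
  phi_spec : ∀ X : TM, phibar (X : E) = (phi X : E) + gbar (X : E) (V : E) • Nt

/-!
Since `B(X,Y) = ḡ(A*_ξ X, Y)` and `B(X,ζ) = -u(X)`, parallelism of `h` applied to `B(Y,ζ)`,
together with `∇_X ζ = -φX` and `∇̄_X V = φ(A*_ξ X) + B(X,V) N - τ(X) V` (both from the Sasakian
structure), gives `B(Y,φX) = ḡ(Y, φ(A*_ξ X)) + B(X,V) θ(Y)`. Taking `Y = ξ` kills `B(X,V)`;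
then skew-symmetry of `φ̄` turns the identity into (i). Parallelism applied to `B(Y,V) = 0`
now gives `B(Y, φ(A*_ξ X)) = 0`. Finally a vector `W` with `B(·,W) = 0` has `A*_ξ W = 0`,
because `A*_ξ W` lies in the nondegenerate screen `S(TM)` and is `ḡ`-orthogonal to it.
-/

namespace SasakiLightlikeHypersurface

variable {F : Type} [CommRing F] [Algebra ℝ F] {E : Type} [AddCommGroup E] [Module F E]
variable (H : SasakiLightlikeHypersurface F E)

lemma eq_zero_of_smul_Nt_eq_zero {c : F} (h : c • H.Nt = 0) : c = 0 := by
  simpa [H.gbar_xi_Nt] using congrArg (H.gbar (H.xi : E)) h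

lemma gbar_xi_right (W : H.TM) : H.gbar (W : E) (H.xi : E) = 0 := by
  rw [H.gbar_symm]; exact H.xi_normal W

lemma gbar_Nt_xi : H.gbar H.Nt (H.xi : E) = 1 := by
  rw [H.gbar_symm]; exact H.gbar_xi_Nt

lemma nablaBar_neg (X : H.TM) (Z : E) : H.nablaBar X (-Z) = -H.nablaBar X Z := by
  simpa using H.nablaBar_leibniz X (-1) Z

lemma B_comm (X Y : H.TM) : H.B X Y = H.B Y X := by
  have h := congrArg (H.gbar · (H.xi : E)) (H.nablaBar_torsion_free X Y)
  simp only [H.gauss, map_add, map_sub, map_smul, LinearMap.add_apply, LinearMap.sub_apply,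
    LinearMap.smul_apply, smul_eq_mul, H.gbar_xi_right, H.gbar_Nt_xi] at h
  linear_combination h

lemma B_eq_gbar_Astar (X W : H.TM) : H.B X W = H.gbar (H.Astar X : E) (W : E) := by
  have h := H.nablaBar_metric X (W : E) (H.xi : E)
  rw [H.gauss, H.weingarten_screen, H.gbar_xi_right] at h
  simp only [map_add, map_sub, map_neg, map_smul, LinearMap.add_apply, LinearMap.smul_apply,
    smul_eq_mul, map_zero, H.gbar_xi_right, H.gbar_Nt_xi] at h
  rw [H.gbar_symm]
  linear_combination -h

lemma gbar_Astar_Nt (X : H.TM) : H.gbar (H.Astar X : E) H.Nt = 0 := by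
  have h := H.nablaBar_metric X (H.xi : E) H.Nt
  simp only [H.gbar_xi_Nt, H.weingarten_screen, H.weingarten, map_add, map_sub, map_neg,
    map_smul, LinearMap.sub_apply, LinearMap.neg_apply, LinearMap.smul_apply, smul_eq_mul,
    Derivation.map_one_eq_zero, H.xi_normal] at h
  linear_combination h

lemma Astar_eq_zero_of_forall_B_eq_zero {W : H.TM} (hW : ∀ Z : H.TM, H.B Z W = 0) :
    H.Astar W = 0 := by
  have hP : (H.Astar W : E) = H.P (H.Astar W) := by
    simpa [H.gbar_Astar_Nt] using H.P_spec (H.Astar W)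
  have horth : ∀ Z ∈ H.S, H.gbar (H.P (H.Astar W) : E) Z = 0 := fun Z hZ => by
    rw [← hP, ← H.B_eq_gbar_Astar W ⟨Z, H.S_le hZ⟩, H.B_comm, hW]
  have h := H.S_nondeg _ (H.P_mem (H.Astar W)) horth
  exact Submodule.coe_eq_zero.mp (hP.trans h)

lemma gbar_phibar_zeta (X : H.TM) : H.gbar (H.phibar (X : E)) (H.zeta : E) = 0 := by
  have h := H.nablaBar_metric X (H.zeta : E) (H.zeta : E)
  rw [H.gbar_zeta_zeta, H.sasaki_zeta, H.gbar_symm (H.zeta : E)] at h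
  simp only [Derivation.map_one_eq_zero, map_neg, LinearMap.neg_apply] at h
  have h2 : (2 : ℝ) • H.gbar (H.phibar (X : E)) (H.zeta : E) = 0 := by
    rw [two_smul]; linear_combination h
  exact (smul_eq_zero.mp h2).resolve_left two_ne_zero

lemma gbar_phibar_right (X Y : H.TM) :
    H.gbar (X : E) (H.phibar (Y : E)) = -H.gbar (H.phibar (X : E)) (Y : E) := by
  have h := H.phibar_metric (X : E) (H.phibar (Y : E))
  simp only [H.phibar_sq, H.gbar_phibar_zeta, map_add, map_neg, map_smul, smul_eq_mul] at h
  linear_combination -h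

lemma B_zeta (X : H.TM) : H.B X H.zeta = -H.gbar (X : E) (H.V : E) := by
  have h := congrArg (H.gbar · (H.xi : E)) ((H.gauss X H.zeta).symm.trans (H.sasaki_zeta X))
  simp only [H.phi_spec, map_add, map_neg, map_smul, LinearMap.add_apply, LinearMap.neg_apply,
    LinearMap.smul_apply, smul_eq_mul, H.gbar_xi_right, H.gbar_Nt_xi] at h
  linear_combination h

lemma nabla_zeta (X : H.TM) : (H.nabla X H.zeta : E) = -(H.phi X : E) := by
  have h := (H.gauss X H.zeta).symm.trans (H.sasaki_zeta X)
  rw [H.phi_spec, H.B_zeta] at h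
  linear_combination (norm := module) h

lemma nablaBar_V (X : H.TM) :
    H.nablaBar X (H.V : E)
      = (H.phi (H.Astar X) : E) + H.B X H.V • H.Nt - H.tau X • (H.V : E) := by
  have hV : H.phibar (H.xi : E) = -(H.V : E) := by rw [H.V_spec, neg_neg]
  have h := H.sasaki X (H.xi : E)
  rw [H.xi_normal, H.gbar_xi_right, H.weingarten_screen, hV, H.nablaBar_neg] at h
  simp only [map_sub, map_neg, map_smul, zero_smul, sub_zero, hV, H.phi_spec,
    ← H.B_eq_gbar_Astar] at h
  linear_combination (norm := module) -h

/-- `(∇_X h)(Y,Z) = 0`, where `∇ᵗ_X h(Y,Z) = (X(B(Y,Z)) + B(Y,Z) τ(X)) N`. -/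
def HasParallelSecondFundamentalForm : Prop :=
  ∀ X Y Z : H.TM, (H.D X (H.B Y Z) + H.B Y Z * H.tau X) • H.Nt
    - H.B (H.nabla X Y) Z • H.Nt - H.B Y (H.nabla X Z) • H.Nt = 0

namespace HasParallelSecondFundamentalForm

variable {H}
variable (hpar : H.HasParallelSecondFundamentalForm)
include hpar

lemma D_B (X Y Z : H.TM) :
    H.D X (H.B Y Z) + H.B Y Z * H.tau X = H.B (H.nabla X Y) Z + H.B Y (H.nabla X Z) := by
  have h : (H.D X (H.B Y Z) + H.B Y Z * H.tau X - H.B (H.nabla X Y) Z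
      - H.B Y (H.nabla X Z)) • H.Nt = 0 := by
    rw [sub_smul, sub_smul]; exact hpar X Y Z
  linear_combination H.eq_zero_of_smul_Nt_eq_zero h

/-- The derivative of `B(Y,ζ) = -u(Y)` along `X`, computed once by parallelism and once by
metric compatibility of `∇̄`. -/
lemma B_phi (X Y : H.TM) :
    H.B Y (H.phi X)
      = H.gbar (Y : E) (H.phi (H.Astar X) : E) + H.B X H.V * H.gbar (Y : E) H.Nt := by
  have hpar_zeta := hpar.D_B X Y H.zeta
  rw [H.B_zeta, H.B_zeta, map_neg] at hpar_zeta
  have hB_nabla_zeta : H.B Y (H.nabla X H.zeta) = -H.B Y (H.phi X) := by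
    rw [H.B_eq_gbar_Astar, H.nabla_zeta, map_neg, ← H.B_eq_gbar_Astar]
  have hmetric := H.nablaBar_metric X (Y : E) (H.V : E)
  rw [H.gauss, H.nablaBar_V] at hmetric
  simp only [map_add, map_sub, map_smul, LinearMap.add_apply, LinearMap.smul_apply, smul_eq_mul,
    H.gbar_Nt_S _ H.V_mem] at hmetric
  linear_combination hpar_zeta + hmetric + hB_nabla_zeta

lemma B_V (X : H.TM) : H.B X H.V = 0 := by
  have h := hpar.B_phi X H.xi
  rw [H.gbar_xi_Nt, H.xi_normal, H.B_comm, H.B_eq_gbar_Astar, H.gbar_xi_right] at h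
  linear_combination -h

lemma B_phi_add_B_phi (X Y : H.TM) : H.B X (H.phi Y) + H.B Y (H.phi X) = 0 := by
  have hV : H.gbar (H.Astar X : E) (H.V : E) = 0 := by rw [← H.B_eq_gbar_Astar, hpar.B_V]
  have hphi_Astar : H.gbar (Y : E) (H.phi (H.Astar X) : E)
      = H.gbar (Y : E) (H.phibar (H.Astar X : E)) := by
    simp [H.phi_spec (H.Astar X), hV]
  have hphi_Y : H.gbar (H.phibar (Y : E)) (H.Astar X : E) = H.B X (H.phi Y) := by
    simp [H.phi_spec Y, H.gbar_symm H.Nt, H.gbar_Astar_Nt, H.B_eq_gbar_Astar X (H.phi Y),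
      H.gbar_symm (H.phi Y : E)]
  have h := hpar.B_phi X Y
  rw [hpar.B_V, hphi_Astar, H.gbar_phibar_right, hphi_Y] at h
  linear_combination h

lemma B_phi_Astar (X Y : H.TM) : H.B Y (H.phi (H.Astar X)) = 0 := by
  have hnabla_V : (H.nabla X H.V : E) = (H.phi (H.Astar X) : E) - H.tau X • (H.V : E) := by
    simpa [hpar.B_V] using (H.gauss X H.V).symm.trans (H.nablaBar_V X)
  have hpar_V := hpar.D_B X Y H.V
  rw [hpar.B_V, hpar.B_V, map_zero, H.B_eq_gbar_Astar Y (H.nabla X H.V), hnabla_V, map_sub,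
    map_smul, ← H.B_eq_gbar_Astar, ← H.B_eq_gbar_Astar, hpar.B_V] at hpar_V
  linear_combination -hpar_V

end HasParallelSecondFundamentalForm

end SasakiLightlikeHypersurface

/-- Let `(M,g)` be a lightlike hypersurface, tangent to the structure vector field `ζ`, of
an indefinite Sasakian manifold `(M̄, φ̄, ζ, η, ḡ)`, whose second fundamental form
`h = B ⊗ N` is parallel. Then for all `X, Y` tangent to `M`:
(i) `B(X, φY) + B(Y, φX) = 0`; (ii) `A*_ξ V = 0`; (iii) `A*_ξ (φ (A*_ξ X)) = 0`. -/
theorem parallel_h_consequences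
    (F : Type) [CommRing F] [Algebra ℝ F]
    (E : Type) [AddCommGroup E] [Module F E]
    (H : SasakiLightlikeHypersurface F E)
    (hpar : ∀ X Y Z : H.TM,
      (H.D X (H.B Y Z) + H.B Y Z * H.tau X) • H.Nt
        - H.B (H.nabla X Y) Z • H.Nt - H.B Y (H.nabla X Z) • H.Nt = 0) :
    (∀ X Y : H.TM, H.B X (H.phi Y) + H.B Y (H.phi X) = 0)
    ∧ H.Astar H.V = 0
    ∧ (∀ X : H.TM, H.Astar (H.phi (H.Astar X)) = 0) := by
  have hpar : H.HasParallelSecondFundamentalForm := hpar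
  exact ⟨hpar.B_phi_add_B_phi,
    H.Astar_eq_zero_of_forall_B_eq_zero hpar.B_V,
    fun X => H.Astar_eq_zero_of_forall_B_eq_zero (hpar.B_phi_Astar X)⟩
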